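/- arXiv:1609.07013 — 3 statements merged into one kernel-verified Lean document; each statement's English description precedes it below -/
import Mathlib

section
/- Piola identity: Let η : ℝ³ → ℝ³ be twice continuously differentiable, let F(x) be its Jacobian matrix, (F(x))_{ij} = ∂_j η_i(x), and let adj F(x) denote the adjugate matrix of F(x) (so that F(x) · adj F(x) = det F(x) · I). Then for every x ∈ ℝ³ and every index i ∈ {1,2,3} one has ∑_{j=1}^{3} ∂_j [ x ↦ (adj F(x))_{j i} ] = 0; that is, each row of the cofactor matrix det F(x) · F(x)^{-T} is divergence-free. -/
open Matrix

/-- **Piola identity.** For a twice continuously differentiable map `η : ℝ³ → ℝ³` with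
Jacobian matrix `F` (entries `(F x) i j = ∂_j η_i (x)`), each row of the cofactor
matrix (equivalently, each column of the adjugate) is divergence-free:
`∑_j ∂_j ((adj F)_{j i}) = 0`. -/
theorem piola_identity
    (η : (Fin 3 → ℝ) → (Fin 3 → ℝ)) (hη : ContDiff ℝ 2 η)
    (F : (Fin 3 → ℝ) → Matrix (Fin 3) (Fin 3) ℝ)
    (hF : ∀ x i j, F x i j = fderiv ℝ η x (Pi.single j 1) i)
    (x : Fin 3 → ℝ) (i : Fin 3) :
    ∑ j : Fin 3, fderiv ℝ (fun y => (F y).adjugate j i) x (Pi.single j 1) = 0 := by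
  -- differentiability of the first derivative
  have hfd : Differentiable ℝ (fderiv ℝ η) :=
    (hη.fderiv_right (m := 1) le_rfl).differentiable one_ne_zero
  set A := fderiv ℝ (fderiv ℝ η) x with hAdef
  -- derivative of each entry of the Jacobian
  have hD : ∀ (a : Fin 3) (v : Fin 3 → ℝ) (y : Fin 3 → ℝ),
      HasFDerivAt (fun z => fderiv ℝ η z v a)
        (((ContinuousLinearMap.proj a).comp
          (ContinuousLinearMap.apply ℝ (Fin 3 → ℝ) v)).comp (fderiv ℝ (fderiv ℝ η) y)) y := by
    intro a v y
    exact (((ContinuousLinearMap.proj a).comp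
      (ContinuousLinearMap.apply ℝ (Fin 3 → ℝ) v)).hasFDerivAt).comp y (hfd y).hasFDerivAt
  have hdiffG : ∀ (a : Fin 3) (v : Fin 3 → ℝ),
      DifferentiableAt ℝ (fun z => fderiv ℝ η z v a) x := fun a v =>
    (hD a v x).differentiableAt
  have hDf : ∀ (a : Fin 3) (v w : Fin 3 → ℝ),
      fderiv ℝ (fun z => fderiv ℝ η z v a) x w = A w v a := by
    intro a v w
    rw [(hD a v x).fderiv]
    rfl
  -- symmetry of the second derivative
  have hsym : ∀ v w, A v w = A w v := by
    intro v w
    have := (hη.contDiffAt (x := x)).isSymmSndFDerivAt (by norm_num)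
    exact this v w
  -- derivative of products of Jacobian entries
  have hmul : ∀ (a b c d : Fin 3) (w : Fin 3 → ℝ),
      fderiv ℝ (fun y => fderiv ℝ η y (Pi.single b 1) a * fderiv ℝ η y (Pi.single d 1) c) x w
        = A w (Pi.single b 1) a * fderiv ℝ η x (Pi.single d 1) c
          + fderiv ℝ η x (Pi.single b 1) a * A w (Pi.single d 1) c := by
    intro a b c d w
    rw [fderiv_fun_mul (hdiffG a _) (hdiffG c _)]
    simp only [ContinuousLinearMap.add_apply, ContinuousLinearMap.smul_apply, smul_eq_mul,
      hDf]
    ring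
  -- rewrite the adjugate entries
  have hadj : ∀ (j i' : Fin 3) (y : Fin 3 → ℝ), (F y).adjugate j i' =
      !![F y 1 1 * F y 2 2 - F y 1 2 * F y 2 1,
        -(F y 0 1 * F y 2 2) + F y 0 2 * F y 2 1,
        F y 0 1 * F y 1 2 - F y 0 2 * F y 1 1;
        -(F y 1 0 * F y 2 2) + F y 1 2 * F y 2 0,
        F y 0 0 * F y 2 2 - F y 0 2 * F y 2 0,
        -(F y 0 0 * F y 1 2) + F y 0 2 * F y 1 0;
        F y 1 0 * F y 2 1 - F y 1 1 * F y 2 0,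
        -(F y 0 0 * F y 2 1) + F y 0 1 * F y 2 0,
        F y 0 0 * F y 1 1 - F y 0 1 * F y 1 0] j i' := by
    intro j i' y
    rw [Matrix.adjugate_fin_three]
  have h10 : A (Pi.single (1 : Fin 3) (1:ℝ)) (Pi.single (0 : Fin 3) 1)
      = A (Pi.single 0 1) (Pi.single 1 1) := hsym _ _
  have h20 : A (Pi.single (2 : Fin 3) (1:ℝ)) (Pi.single (0 : Fin 3) 1)
      = A (Pi.single 0 1) (Pi.single 2 1) := hsym _ _
  have h21 : A (Pi.single (2 : Fin 3) (1:ℝ)) (Pi.single (1 : Fin 3) 1)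
      = A (Pi.single 1 1) (Pi.single 2 1) := hsym _ _
  have hsub : ∀ (a b c d a' b' c' d' : Fin 3) (w : Fin 3 → ℝ),
      fderiv ℝ (fun y => fderiv ℝ η y (Pi.single b 1) a * fderiv ℝ η y (Pi.single d 1) c
        - fderiv ℝ η y (Pi.single b' 1) a' * fderiv ℝ η y (Pi.single d' 1) c') x w
      = (A w (Pi.single b 1) a * fderiv ℝ η x (Pi.single d 1) c
          + fderiv ℝ η x (Pi.single b 1) a * A w (Pi.single d 1) c)
        - (A w (Pi.single b' 1) a' * fderiv ℝ η x (Pi.single d' 1) c'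
          + fderiv ℝ η x (Pi.single b' 1) a' * A w (Pi.single d' 1) c') := by
    intro a b c d a' b' c' d' w
    rw [fderiv_fun_sub ((hdiffG _ _).fun_mul (hdiffG _ _)) ((hdiffG _ _).fun_mul (hdiffG _ _))]
    simp only [ContinuousLinearMap.sub_apply, hmul]
  have hnadd : ∀ (a b c d a' b' c' d' : Fin 3) (w : Fin 3 → ℝ),
      fderiv ℝ (fun y => -(fderiv ℝ η y (Pi.single b 1) a * fderiv ℝ η y (Pi.single d 1) c)
        + fderiv ℝ η y (Pi.single b' 1) a' * fderiv ℝ η y (Pi.single d' 1) c') x w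
      = -(A w (Pi.single b 1) a * fderiv ℝ η x (Pi.single d 1) c
          + fderiv ℝ η x (Pi.single b 1) a * A w (Pi.single d 1) c)
        + (A w (Pi.single b' 1) a' * fderiv ℝ η x (Pi.single d' 1) c'
          + fderiv ℝ η x (Pi.single b' 1) a' * A w (Pi.single d' 1) c') := by
    intro a b c d a' b' c' d' w
    rw [fderiv_fun_add (((hdiffG _ _).fun_mul (hdiffG _ _)).fun_neg) ((hdiffG _ _).fun_mul (hdiffG _ _)),
      fderiv_fun_neg]
    simp only [ContinuousLinearMap.add_apply, ContinuousLinearMap.neg_apply, hmul]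
  have hi : i = 0 ∨ i = 1 ∨ i = 2 := by omega
  rcases hi with rfl | rfl | rfl <;>
  · simp only [Fin.sum_univ_three, hadj, hF, Matrix.of_apply, Matrix.cons_val',
      Matrix.cons_val_zero, Matrix.cons_val_one, Matrix.head_cons, Matrix.empty_val',
      Matrix.cons_val_fin_one, Matrix.head_fin_const, Matrix.cons_val_two, Matrix.tail_cons]
    simp only [hsub, hnadd, h10, h20, h21]
    ring
end

section
/- Preservation of the divergence-free condition for the magnetic field: Let η : ℝ³ → ℝ³ be twice continuously differentiable with Jacobian matrix F(x) ((F(x))_{ij} = ∂_j η_i(x)) satisfying det F(x) = 1 for all x, and let A(x) = F(x)^{-T}. Let b₀ : ℝ³ → ℝ³ be continuously differentiable with ∑_j ∂_j b₀_j(x) = 0 for all x, and define b(x) = F(x) · b₀(x). Then div_A b = 0 everywhere, i.e., ∑_{i,j} A_{ij}(x) ∂_j b_i(x) = 0 for every x ∈ ℝ³. -/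
open Matrix

set_option maxHeartbeats 1000000 in
/-- **Preservation of the divergence-free condition for the magnetic field.** Let `η : ℝ³ → ℝ³`
be `C²` with Jacobian matrix `F` (`(F x) i j = ∂_j η_i (x)`) satisfying `det (F x) = 1`
everywhere, let `A x = ((F x)⁻¹)ᵀ`, and let `b₀` be `C¹` with `div b₀ = 0`. Then
`b x = F x · b₀ x` satisfies `div_A b = ∑_{i,j} A_{ij} ∂_j b_i = 0` everywhere. -/
theorem div_free_preserved
    (η : (Fin 3 → ℝ) → (Fin 3 → ℝ)) (hη : ContDiff ℝ 2 η)
    (F : (Fin 3 → ℝ) → Matrix (Fin 3) (Fin 3) ℝ)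
    (hF : ∀ x i j, F x i j = fderiv ℝ η x (Pi.single j 1) i)
    (hdet : ∀ x, (F x).det = 1)
    (A : (Fin 3 → ℝ) → Matrix (Fin 3) (Fin 3) ℝ)
    (hA : ∀ x, A x = ((F x)⁻¹)ᵀ)
    (b₀ : (Fin 3 → ℝ) → (Fin 3 → ℝ)) (hb₀ : ContDiff ℝ 1 b₀)
    (hdiv : ∀ x, ∑ j : Fin 3, fderiv ℝ (fun y => b₀ y j) x (Pi.single j 1) = 0)
    (b : (Fin 3 → ℝ) → (Fin 3 → ℝ))
    (hb : ∀ x, b x = (F x).mulVec (b₀ x))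
    (x : Fin 3 → ℝ) :
    ∑ i : Fin 3, ∑ j : Fin 3, A x i j * fderiv ℝ (fun y => b y i) x (Pi.single j 1) = 0 := by
  classical
  have hη1 : Differentiable ℝ η := hη.differentiable (by norm_num)
  have hΦc : ContDiff ℝ 1 (fun y => fderiv ℝ η y) := hη.fderiv_right (by norm_num)
  set Ψ := fderiv ℝ (fun y => fderiv ℝ η y) x with hΨdef
  have hΨ : HasFDerivAt (fun y => fderiv ℝ η y) Ψ x :=
    ((hΦc.differentiable one_ne_zero) x).hasFDerivAt
  have hsymm : ∀ v w, Ψ v w = Ψ w v :=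
    second_derivative_symmetric (fun y => (hη1 y).hasFDerivAt) hΨ
  -- derivatives of the entries of `F`
  have hFe : ∀ i k : Fin 3, HasFDerivAt (fun y => F y i k)
      ((ContinuousLinearMap.proj i).comp (Ψ.flip ((Pi.single k 1 : Fin 3 → ℝ)))) x := by
    intro i k
    have h1 := hΨ.clm_apply (hasFDerivAt_const ((Pi.single k 1 : Fin 3 → ℝ)) x)
    rw [ContinuousLinearMap.comp_zero, zero_add] at h1
    have h2 := hasFDerivAt_pi'.1 h1 i
    have h3 : (fun y => F y i k) = fun y => fderiv ℝ η y (Pi.single k 1) i :=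
      funext fun y => hF y i k
    rw [h3]
    exact h2
  -- derivatives of the entries of `b₀`
  have hb0e : ∀ k : Fin 3, HasFDerivAt (fun y => b₀ y k) (fderiv ℝ (fun y => b₀ y k) x) x :=
    fun k => (((contDiff_pi.1 hb₀ k).differentiable one_ne_zero) x).hasFDerivAt
  -- derivative of the entries of `b`
  have hbfun : ∀ i : Fin 3, (fun y => b y i) =
      fun y => F y i 0 * b₀ y 0 + F y i 1 * b₀ y 1 + F y i 2 * b₀ y 2 := by
    intro i; funext y; rw [hb]; simp [Matrix.mulVec, dotProduct, Fin.sum_univ_three]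
  have hbe : ∀ i : Fin 3, HasFDerivAt (fun y => b y i)
      ((F x i 0 • fderiv ℝ (fun y => b₀ y 0) x +
        b₀ x 0 • ((ContinuousLinearMap.proj i).comp (Ψ.flip ((Pi.single (0:Fin 3) 1 : Fin 3 → ℝ)))) +
        (F x i 1 • fderiv ℝ (fun y => b₀ y 1) x +
        b₀ x 1 • ((ContinuousLinearMap.proj i).comp (Ψ.flip ((Pi.single (1:Fin 3) 1 : Fin 3 → ℝ))))) +
        (F x i 2 • fderiv ℝ (fun y => b₀ y 2) x +
        b₀ x 2 • ((ContinuousLinearMap.proj i).comp (Ψ.flip ((Pi.single (2:Fin 3) 1 : Fin 3 → ℝ)))))) : (Fin 3 → ℝ) →L[ℝ] ℝ) x := by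
    intro i
    rw [hbfun i]
    exact (((hFe i 0).mul (hb0e 0)).add ((hFe i 1).mul (hb0e 1))).add ((hFe i 2).mul (hb0e 2))
  have hbval : ∀ i j : Fin 3, fderiv ℝ (fun y => b y i) x (Pi.single j 1) =
      F x i 0 * fderiv ℝ (fun y => b₀ y 0) x (Pi.single j 1) +
      b₀ x 0 * Ψ (Pi.single j 1) (Pi.single 0 1) i +
      (F x i 1 * fderiv ℝ (fun y => b₀ y 1) x (Pi.single j 1) +
      b₀ x 1 * Ψ (Pi.single j 1) (Pi.single 1 1) i) +
      (F x i 2 * fderiv ℝ (fun y => b₀ y 2) x (Pi.single j 1) +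
      b₀ x 2 * Ψ (Pi.single j 1) (Pi.single 2 1) i) := by
    intro i j
    rw [(hbe i).fderiv]
    simp
  -- Jacobi: derivative of `det F = 1`
  have H := ((((((hFe 0 0).mul (hFe 1 1)).mul (hFe 2 2)).sub
      (((hFe 0 0).mul (hFe 1 2)).mul (hFe 2 1))).sub
      (((hFe 0 1).mul (hFe 1 0)).mul (hFe 2 2))).add
      (((hFe 0 1).mul (hFe 1 2)).mul (hFe 2 0))).add
      (((hFe 0 2).mul (hFe 1 0)).mul (hFe 2 1)) |>.sub
      (((hFe 0 2).mul (hFe 1 1)).mul (hFe 2 0))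
  have hfun : (fun y => F y 0 0 * F y 1 1 * F y 2 2 - F y 0 0 * F y 1 2 * F y 2 1
      - F y 0 1 * F y 1 0 * F y 2 2 + F y 0 1 * F y 1 2 * F y 2 0
      + F y 0 2 * F y 1 0 * F y 2 1 - F y 0 2 * F y 1 1 * F y 2 0) = fun _ => (1:ℝ) :=
    funext fun y => by rw [← Matrix.det_fin_three (F y)]; exact hdet y
  replace H := H.congr_of_eventuallyEq (f₁ := fun _ => (1:ℝ))
    (Filter.Eventually.of_forall fun y => (congrFun hfun y).symm)
  have huniq := H.unique (hasFDerivAt_const 1 x)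
  have hz0 := ContinuousLinearMap.ext_iff.1 huniq (Pi.single (0:Fin 3) 1)
  have hz1 := ContinuousLinearMap.ext_iff.1 huniq (Pi.single (1:Fin 3) 1)
  have hz2 := ContinuousLinearMap.ext_iff.1 huniq (Pi.single (2:Fin 3) 1)
  simp at hz0 hz1 hz2
  -- symmetry of second derivatives, normalized
  have e10 : ∀ i : Fin 3, Ψ (Pi.single 1 1) (Pi.single 0 1) i = Ψ (Pi.single 0 1) (Pi.single 1 1) i :=
    fun i => congrFun (hsymm _ _) i
  have e20 : ∀ i : Fin 3, Ψ (Pi.single 2 1) (Pi.single 0 1) i = Ψ (Pi.single 0 1) (Pi.single 2 1) i :=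
    fun i => congrFun (hsymm _ _) i
  have e21 : ∀ i : Fin 3, Ψ (Pi.single 2 1) (Pi.single 1 1) i = Ψ (Pi.single 1 1) (Pi.single 2 1) i :=
    fun i => congrFun (hsymm _ _) i
  simp only [e10, e20, e21] at hz1 hz2
  -- A in terms of the adjugate
  have hA00 : A x 0 0 = F x 1 1 * F x 2 2 - F x 1 2 * F x 2 1 := by
    rw [hA, Matrix.transpose_apply, Matrix.inv_def, hdet, Ring.inverse_one, one_smul,
      Matrix.adjugate_fin_three]
    norm_num
  have hA01 : A x 0 1 = -(F x 1 0 * F x 2 2) + F x 1 2 * F x 2 0 := by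
    rw [hA, Matrix.transpose_apply, Matrix.inv_def, hdet, Ring.inverse_one, one_smul,
      Matrix.adjugate_fin_three]
    norm_num
  have hA02 : A x 0 2 = F x 1 0 * F x 2 1 - F x 1 1 * F x 2 0 := by
    rw [hA, Matrix.transpose_apply, Matrix.inv_def, hdet, Ring.inverse_one, one_smul,
      Matrix.adjugate_fin_three]
    norm_num
    rfl
  have hA10 : A x 1 0 = -(F x 0 1 * F x 2 2) + F x 0 2 * F x 2 1 := by
    rw [hA, Matrix.transpose_apply, Matrix.inv_def, hdet, Ring.inverse_one, one_smul,
      Matrix.adjugate_fin_three]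
    norm_num
  have hA11 : A x 1 1 = F x 0 0 * F x 2 2 - F x 0 2 * F x 2 0 := by
    rw [hA, Matrix.transpose_apply, Matrix.inv_def, hdet, Ring.inverse_one, one_smul,
      Matrix.adjugate_fin_three]
    norm_num
  have hA12 : A x 1 2 = -(F x 0 0 * F x 2 1) + F x 0 1 * F x 2 0 := by
    rw [hA, Matrix.transpose_apply, Matrix.inv_def, hdet, Ring.inverse_one, one_smul,
      Matrix.adjugate_fin_three]
    norm_num
    rfl
  have hA20 : A x 2 0 = F x 0 1 * F x 1 2 - F x 0 2 * F x 1 1 := by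
    rw [hA, Matrix.transpose_apply, Matrix.inv_def, hdet, Ring.inverse_one, one_smul,
      Matrix.adjugate_fin_three]
    norm_num
    rfl
  have hA21 : A x 2 1 = -(F x 0 0 * F x 1 2) + F x 0 2 * F x 1 0 := by
    rw [hA, Matrix.transpose_apply, Matrix.inv_def, hdet, Ring.inverse_one, one_smul,
      Matrix.adjugate_fin_three]
    norm_num
    rfl
  have hA22 : A x 2 2 = F x 0 0 * F x 1 1 - F x 0 1 * F x 1 0 := by
    rw [hA, Matrix.transpose_apply, Matrix.inv_def, hdet, Ring.inverse_one, one_smul,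
      Matrix.adjugate_fin_three]
    norm_num
    rfl
  -- divergence-free of b₀ at x
  have hdivx : fderiv ℝ (fun y => b₀ y 0) x (Pi.single 0 1) +
      fderiv ℝ (fun y => b₀ y 1) x (Pi.single 1 1) +
      fderiv ℝ (fun y => b₀ y 2) x (Pi.single 2 1) = 0 := by
    simpa [Fin.sum_univ_three] using hdiv x
  -- final algebra
  simp only [Fin.sum_univ_three]
  simp only [hbval]
  simp only [hA00, hA01, hA02, hA10, hA11, hA12, hA20, hA21, hA22]
  simp only [e10, e20, e21]
  linear_combination b₀ x 0 * hz0 + b₀ x 1 * hz1 + b₀ x 2 * hz2 +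
    (F x 0 0 * F x 1 1 * F x 2 2 - F x 0 0 * F x 1 2 * F x 2 1
      - F x 0 1 * F x 1 0 * F x 2 2 + F x 0 1 * F x 1 2 * F x 2 0
      + F x 0 2 * F x 1 0 * F x 2 1 - F x 0 2 * F x 1 1 * F x 2 0) * hdivx
end

section
/- Derivative of the mollifier commutator: There is a constant C, dependingic only on ρ, such that for every κ > 0, every continuously differentiable h : ℝ² → ℝ with ‖h‖_{L∞} + ‖∇h‖_{L∞} ≤ M, every smooth compactly supported g : ℝ² → ℝ, and all coordinate directions α, β ∈ {1,2}, one has ‖∂_β ( Λ_κ(h · ∂_α g) − h · Λ_κ(∂_α g) )‖_{L²(ℝ²)} ≤ C · M · ( ‖g‖_{L²(ℝ²)} + ‖∇g‖_{L²(ℝ²)} ), uniformly in κ. (The key identity is ∂_β([Λ_κ,h]∂_α g) = [Λ_κ, ∂_β h]∂_α g + [Λ_κ, h]∂_β ∂_α g, after which the Friedrichs-type commutator bound applies to each term.) -/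
open MeasureTheory

/-- The partial derivative in the `α`-th coordinate direction on `ℝ²`. -/
noncomputable def pd2 (α : Fin 2) (f : (Fin 2 → ℝ) → ℝ) : (Fin 2 → ℝ) → ℝ :=
  fun x => fderiv ℝ f x (Pi.single α 1)

/-- The mollification `Λ_κ g = ρ_κ * g` on `ℝ²`, where `ρ_κ (x) = κ⁻² ρ (x / κ)`. -/
noncomputable def mollify (ρ : (Fin 2 → ℝ) → ℝ) (κ : ℝ) (g : (Fin 2 → ℝ) → ℝ) :
    (Fin 2 → ℝ) → ℝ :=
  fun x => ∫ y, (κ ^ 2)⁻¹ * ρ (κ⁻¹ • (x - y)) * g y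

noncomputable section
open MeasureTheory ENNReal Convolution
namespace MollComm

abbrev V := Fin 2 → ℝ

theorem lint_sub (f : V → ℝ≥0∞) (hf : Measurable f) (x : V) : ∫⁻ y, f (x - y) = ∫⁻ y, f y := by
  have h1 : ∫⁻ y, (fun z : V => f (x + z)) (-y) = ∫⁻ y, f (x + y) :=
    (Measure.measurePreserving_neg (volume : Measure V)).lintegral_comp
      (hf.comp (measurable_const_add x))
  simp_rw [sub_eq_add_neg]
  rw [h1, lintegral_add_left_eq_self f x]

theorem young (φ f : V → ℝ≥0∞) (hφ : Measurable φ) (hf : Measurable f) :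
    ∫⁻ x, (∫⁻ y, φ (x - y) * f y) ^ (2:ℝ) ≤ (∫⁻ z, φ z) ^ (2:ℝ) * ∫⁻ y, (f y) ^ (2:ℝ) := by
  set a := ∫⁻ z, φ z with ha
  have hconj : Real.HolderConjugate 2 2 := ⟨by norm_num, by norm_num, by norm_num⟩
  have step1 : ∀ x, (∫⁻ y, φ (x - y) * f y) ^ (2:ℝ) ≤ a * ∫⁻ y, φ (x - y) * (f y) ^ (2:ℝ) := by
    intro x
    have hφx : Measurable fun y => φ (x - y) := hφ.comp (measurable_const.sub measurable_id)
    have hCS : ∫⁻ y, φ (x - y) * f y ≤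
        a ^ ((2:ℝ)⁻¹) * (∫⁻ y, φ (x - y) * (f y) ^ (2:ℝ)) ^ ((2:ℝ)⁻¹) := by
      have h0 := ENNReal.lintegral_mul_le_Lp_mul_Lq (volume : Measure V) hconj
        (f := fun y => (φ (x - y)) ^ ((2:ℝ)⁻¹)) (g := fun y => (φ (x - y)) ^ ((2:ℝ)⁻¹) * f y)
        (hφx.pow_const _).aemeasurable ((hφx.pow_const _).mul hf).aemeasurable
      calc ∫⁻ y, φ (x - y) * f y
          = ∫⁻ y, (φ (x - y)) ^ ((2:ℝ)⁻¹) * ((φ (x - y)) ^ ((2:ℝ)⁻¹) * f y) := by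
            refine lintegral_congr fun y => ?_
            rw [← mul_assoc, ← ENNReal.rpow_add_of_nonneg _ _ (by norm_num) (by norm_num)]
            norm_num
        _ ≤ (∫⁻ y, ((φ (x - y)) ^ ((2:ℝ)⁻¹)) ^ (2:ℝ)) ^ (1/(2:ℝ)) *
              (∫⁻ y, ((φ (x - y)) ^ ((2:ℝ)⁻¹) * f y) ^ (2:ℝ)) ^ (1/(2:ℝ)) := h0
        _ = a ^ ((2:ℝ)⁻¹) * (∫⁻ y, φ (x - y) * (f y) ^ (2:ℝ)) ^ ((2:ℝ)⁻¹) := by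
            rw [one_div]
            have e2 : (∫⁻ y, ((φ (x - y)) ^ ((2:ℝ)⁻¹)) ^ (2:ℝ)) = a := by
              rw [show (∫⁻ y, ((φ (x - y)) ^ ((2:ℝ)⁻¹)) ^ (2:ℝ)) = ∫⁻ y, φ (x - y) from
                lintegral_congr fun y => by rw [← ENNReal.rpow_mul]; norm_num]
              exact lint_sub φ hφ x
            have e3 : (∫⁻ y, ((φ (x - y)) ^ ((2:ℝ)⁻¹) * f y) ^ (2:ℝ)) =
                ∫⁻ y, φ (x - y) * (f y) ^ (2:ℝ) :=
              lintegral_congr fun y => by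
                rw [ENNReal.mul_rpow_of_nonneg _ _ (by norm_num), ← ENNReal.rpow_mul]; norm_num
            rw [e2, e3]
    calc (∫⁻ y, φ (x - y) * f y) ^ (2:ℝ)
        ≤ (a ^ ((2:ℝ)⁻¹) * (∫⁻ y, φ (x - y) * (f y) ^ (2:ℝ)) ^ ((2:ℝ)⁻¹)) ^ (2:ℝ) :=
          ENNReal.rpow_le_rpow hCS (by norm_num)
      _ = a * ∫⁻ y, φ (x - y) * (f y) ^ (2:ℝ) := by
          rw [ENNReal.mul_rpow_of_nonneg _ _ (by norm_num), ← ENNReal.rpow_mul,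
            ← ENNReal.rpow_mul]
          norm_num
  have hmeas2 : Measurable fun p : V × V => φ (p.1 - p.2) * (f p.2) ^ (2:ℝ) :=
    (hφ.comp (measurable_fst.sub measurable_snd)).mul
      ((hf.comp measurable_snd).pow_const _)
  calc ∫⁻ x, (∫⁻ y, φ (x - y) * f y) ^ (2:ℝ)
      ≤ ∫⁻ x, a * ∫⁻ y, φ (x - y) * (f y) ^ (2:ℝ) := lintegral_mono step1
    _ = a * ∫⁻ x, ∫⁻ y, φ (x - y) * (f y) ^ (2:ℝ) :=
        lintegral_const_mul a (Measurable.lintegral_prod_right hmeas2)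
    _ = a * ∫⁻ y, ∫⁻ x, φ (x - y) * (f y) ^ (2:ℝ) := by
        rw [lintegral_lintegral_swap hmeas2.aemeasurable]
    _ = a * ∫⁻ y, (f y) ^ (2:ℝ) * a := by
        congr 1
        refine lintegral_congr fun y => ?_
        simp_rw [mul_comm (φ (_ - y)) ((f y) ^ (2:ℝ))]
        rw [lintegral_const_mul _ (show Measurable fun x : V => φ (x - y) from
          hφ.comp (measurable_sub_const y)), lintegral_sub_right_eq_self φ y]
    _ = a ^ (2:ℝ) * ∫⁻ y, (f y) ^ (2:ℝ) := by
        rw [lintegral_mul_const _ (hf.pow_const _),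
          show (2:ℝ) = ((2:ℕ):ℝ) by norm_num, ENNReal.rpow_natCast]
        ring

theorem finrankV : Module.finrank ℝ V = 2 := by simp

theorem int_comp_inv_smul (f : V → ℝ) {κ : ℝ} (hκ : 0 < κ) :
    ∫ z, f (κ⁻¹ • z) = κ ^ 2 * ∫ z, f z := by
  rw [Measure.integral_comp_inv_smul (volume : Measure V) f κ, finrankV]
  simp [abs_of_nonneg (pow_nonneg hκ.le 2), smul_eq_mul]

def rk (ρ : V → ℝ) (κ : ℝ) : V → ℝ := fun z => (κ ^ 2)⁻¹ * ρ (κ⁻¹ • z)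

theorem rk_contDiff {ρ : V → ℝ} (hρ : ContDiff ℝ (⊤ : ℕ∞) ρ) {κ : ℝ} :
    ContDiff ℝ (⊤ : ℕ∞) (rk ρ κ) :=
  contDiff_const.mul (hρ.comp (contDiff_id.const_smul κ⁻¹))

theorem rk_eq_zero {ρ : V → ℝ} (hρsupp : tsupport ρ ⊆ {x : V | ∑ i : Fin 2, x i ^ 2 ≤ 1})
    {κ : ℝ} (hκ : 0 < κ) {z : V} (hz : κ < ‖z‖) : rk ρ κ z = 0 := by
  have hzρ : ρ (κ⁻¹ • z) = 0 := by
    by_contra hne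
    have hmem : κ⁻¹ • z ∈ tsupport ρ := subset_tsupport ρ hne
    have h1 : ∑ i : Fin 2, (κ⁻¹ • z) i ^ 2 ≤ 1 := hρsupp hmem
    obtain ⟨i, hi⟩ : ∃ i, κ < ‖z i‖ := by
      by_contra hc
      push_neg at hc
      exact absurd (pi_norm_le_iff_of_nonneg hκ.le |>.2 hc) (not_le.2 hz)
    have h2 : 1 < ((κ⁻¹ • z) i) ^ 2 := by
      have : 1 < ‖κ⁻¹ * z i‖ := by
        rw [norm_mul, norm_inv, Real.norm_eq_abs (κ), abs_of_pos hκ]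
        rw [show (1:ℝ) = κ⁻¹ * κ by field_simp]
        exact mul_lt_mul_of_pos_left hi (inv_pos.2 hκ)
      calc (1:ℝ) = 1 ^ 2 := by norm_num
        _ < ‖κ⁻¹ * z i‖ ^ 2 := by
            apply pow_lt_pow_left₀ this (by norm_num) (by norm_num)
        _ = ((κ⁻¹ • z) i) ^ 2 := by
            simp only [Pi.smul_apply, smul_eq_mul, norm_mul, Real.norm_eq_abs,
              mul_pow, sq_abs]
    have h3 : ((κ⁻¹ • z) i) ^ 2 ≤ ∑ j : Fin 2, ((κ⁻¹ • z) j) ^ 2 :=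
      Finset.single_le_sum (f := fun j => ((κ⁻¹ • z) j) ^ 2)
        (fun j _ => sq_nonneg _) (Finset.mem_univ i)
    linarith
  simp [rk, hzρ]

theorem rk_compactSupport {ρ : V → ℝ} (hρsupp : tsupport ρ ⊆ {x : V | ∑ i : Fin 2, x i ^ 2 ≤ 1})
    {κ : ℝ} (hκ : 0 < κ) : HasCompactSupport (rk ρ κ) := by
  apply HasCompactSupport.intro (isCompact_closedBall (0 : V) κ)
  intro z hz
  exact rk_eq_zero hρsupp hκ (by simpa [dist_zero_right] using hz)

theorem rk_fderiv_eq_zero {ρ : V → ℝ} (hρsupp : tsupport ρ ⊆ {x : V | ∑ i : Fin 2, x i ^ 2 ≤ 1})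
    {κ : ℝ} (hκ : 0 < κ) {z : V} (hz : κ < ‖z‖) : fderiv ℝ (rk ρ κ) z = 0 := by
  have hopen : IsOpen {w : V | κ < ‖w‖} := isOpen_lt continuous_const continuous_norm
  have hev : rk ρ κ =ᶠ[nhds z] fun _ => (0:ℝ) := by
    filter_upwards [hopen.mem_nhds hz] with w hw
    exact rk_eq_zero hρsupp hκ hw
  rw [hev.fderiv_eq, fderiv_fun_const]
  rfl

theorem rk_fderiv_apply {ρ : V → ℝ} (hρ : ContDiff ℝ (⊤ : ℕ∞) ρ) (κ : ℝ) (z : V) (w : V) :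
    fderiv ℝ (rk ρ κ) z w = (κ ^ 2)⁻¹ * (κ⁻¹ * fderiv ℝ ρ (κ⁻¹ • z) w) := by
  have hA : HasFDerivAt (fun z : V => κ⁻¹ • z) (κ⁻¹ • ContinuousLinearMap.id ℝ V) z := by
    simpa using (κ⁻¹ • ContinuousLinearMap.id ℝ V).hasFDerivAt (x := z)
  have hρ' : HasFDerivAt ρ (fderiv ℝ ρ (κ⁻¹ • z)) (κ⁻¹ • z) :=
    (hρ.differentiable (by simp) (κ⁻¹ • z)).hasFDerivAt
  have hcomp : HasFDerivAt (fun z : V => ρ (κ⁻¹ • z))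
      ((fderiv ℝ ρ (κ⁻¹ • z)).comp (κ⁻¹ • ContinuousLinearMap.id ℝ V)) z := hρ'.comp z hA
  have : HasFDerivAt (rk ρ κ)
      ((κ ^ 2)⁻¹ • (fderiv ℝ ρ (κ⁻¹ • z)).comp (κ⁻¹ • ContinuousLinearMap.id ℝ V)) z :=
    hcomp.const_mul _
  rw [this.fderiv]
  simp [ContinuousLinearMap.comp_apply, smul_eq_mul, mul_comm]

theorem mollify_eq_conv (ρ : V → ℝ) (κ : ℝ) (v : V → ℝ) :
    mollify ρ κ v = v ⋆[ContinuousLinearMap.mul ℝ ℝ, volume] rk ρ κ := by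
  funext x
  simp only [mollify, convolution_def, ContinuousLinearMap.mul_apply', rk]
  exact integral_congr_ae (Filter.Eventually.of_forall fun y => by ring)

theorem mollify_pd2 {ρ : V → ℝ} (hρ : ContDiff ℝ (⊤ : ℕ∞) ρ) {κ : ℝ}
    (hrkc : HasCompactSupport (rk ρ κ))
    {v : V → ℝ} (hv : Continuous v) (x : V) (β : Fin 2) :
    HasFDerivAt (mollify ρ κ v)
      ((v ⋆[(ContinuousLinearMap.mul ℝ ℝ).precompR V, volume] fderiv ℝ (rk ρ κ)) x) x ∧
    ((v ⋆[(ContinuousLinearMap.mul ℝ ℝ).precompR V, volume] fderiv ℝ (rk ρ κ)) x) (Pi.single β 1)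
      = ∫ y, v y * fderiv ℝ (rk ρ κ) (x - y) (Pi.single β 1) := by
  have hvloc : LocallyIntegrable v volume := hv.locallyIntegrable
  have hrk1 : ContDiff ℝ 1 (rk ρ κ) :=
    (contDiff_const.mul (hρ.comp (contDiff_id.const_smul κ⁻¹))).of_le (by simp)
  constructor
  · rw [mollify_eq_conv]
    exact hrkc.hasFDerivAt_convolution_right _ hvloc hrk1 x
  · rw [convolution_precompR_apply _ hvloc (hrkc.fderiv ℝ)
      (hrk1.continuous_fderiv one_ne_zero) x (Pi.single β 1)]
    simp only [convolution_def, ContinuousLinearMap.mul_apply']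

end MollComm

end

open ENNReal Convolution in
/-- **Derivative of the mollifier commutator.** There is a constant `C > 0`, depending only on
the mollifying kernel `ρ` (smooth, nonnegative, supported in the closed Euclidean unit ball,
of integral one), such that for every `κ > 0`, every `C¹` function `h` with
`‖h‖_{L∞} + ‖∇h‖_{L∞} ≤ M`, every smooth compactly supported `g`, and all coordinate
directions `α, β`,
`‖∂_β (Λ_κ (h ∂_α g) − h Λ_κ (∂_α g))‖_{L²} ≤ C M (‖g‖_{L²} + ‖∇g‖_{L²})`,
uniformly in `κ`, where `‖∇g‖_{L²}` is the sum of the `L²` norms of the partial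
derivatives of `g`. -/
theorem mollifier_commutator_derivative
    (ρ : (Fin 2 → ℝ) → ℝ) (hρ : ContDiff ℝ (⊤ : ℕ∞) ρ) (hρnn : ∀ x, 0 ≤ ρ x)
    (hρsupp : tsupport ρ ⊆ {x : Fin 2 → ℝ | ∑ i : Fin 2, x i ^ 2 ≤ 1})
    (hρint : ∫ x, ρ x = 1) :
    ∃ C > 0, ∀ κ > (0 : ℝ), ∀ (M : ℝ) (h : (Fin 2 → ℝ) → ℝ),
      ContDiff ℝ 1 h → (∀ x, |h x| + ‖fderiv ℝ h x‖ ≤ M) →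
      ∀ g : (Fin 2 → ℝ) → ℝ, ContDiff ℝ (⊤ : ℕ∞) g → HasCompactSupport g →
      ∀ α β : Fin 2,
        eLpNorm (pd2 β (fun x => mollify ρ κ (fun y => h y * pd2 α g y) x
            - h x * mollify ρ κ (pd2 α g) x)) 2 volume
          ≤ ENNReal.ofReal (C * M) *
              (eLpNorm g 2 volume + ∑ γ : Fin 2, eLpNorm (pd2 γ g) 2 volume) := by
  classical
  open MollComm in
  set K : Fin 2 → ℝ := fun γ => ∫ w, |fderiv ℝ ρ w (Pi.single γ 1)| with hKdef
  have hK0 : ∀ γ, 0 ≤ K γ := fun γ => integral_nonneg fun w => abs_nonneg _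
  refine ⟨1 + (K 0 + K 1), by have := hK0 0; have := hK0 1; linarith, ?_⟩
  intro κ hκ M h hh hhM g hg hgc α β
  set C : ℝ := 1 + (K 0 + K 1) with hCdef
  have hM0 : 0 ≤ M := le_trans (by positivity) (hhM 0)
  have hfd_le : ∀ x, ‖fderiv ℝ h x‖ ≤ M := fun x =>
    le_trans (le_add_of_nonneg_left (abs_nonneg _)) (hhM x)
  have hLip : ∀ x y : MollComm.V, |h y - h x| ≤ M * ‖y - x‖ := by
    intro x y
    have := (convex_univ : Convex ℝ (Set.univ : Set MollComm.V)).norm_image_sub_le_of_norm_fderiv_le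
      (fun w _ => hh.differentiable one_ne_zero w)
      (fun w _ => hfd_le w) (Set.mem_univ x) (Set.mem_univ y)
    simpa [Real.norm_eq_abs] using this
  set u : MollComm.V → ℝ := pd2 α g with hudef
  have hu_cd : ContDiff ℝ (⊤ : ℕ∞) u := by
    have : ContDiff ℝ (⊤ : ℕ∞) (fderiv ℝ g) := hg.fderiv_right (by simp)
    exact this.clm_apply contDiff_const
  have hu_cont : Continuous u := hu_cd.continuous
  have hu_supp : HasCompactSupport u := by
    have := (hgc.fderiv ℝ).comp_left
      (g := fun L : MollComm.V →L[ℝ] ℝ => L (Pi.single α 1)) rfl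
    exact this
  set f1 : MollComm.V → ℝ := fun y => h y * u y with hf1def
  have hf1_cont : Continuous f1 := (hh.continuous).mul hu_cont
  have hf1_supp : HasCompactSupport f1 := hu_supp.mul_left
  have hrkc : HasCompactSupport (MollComm.rk ρ κ) := MollComm.rk_compactSupport hρsupp hκ
  have hrk1 : ContDiff ℝ 1 (MollComm.rk ρ κ) := (MollComm.rk_contDiff hρ).of_le (by simp)
  set D : MollComm.V → ℝ := fun z => fderiv ℝ (MollComm.rk ρ κ) z (Pi.single β 1) with hDdef
  have hD_cont : Continuous D := (hrk1.continuous_fderiv one_ne_zero).clm_apply continuous_const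
  have hD_supp : HasCompactSupport D := by
    have := (hrkc.fderiv ℝ).comp_left
      (g := fun L : MollComm.V →L[ℝ] ℝ => L (Pi.single β 1)) rfl
    exact this
  have hD_int : Integrable D := hD_cont.integrable_of_hasCompactSupport hD_supp
  have hrk_cont : Continuous (MollComm.rk ρ κ) := (MollComm.rk_contDiff hρ).continuous
  have hrk_int : Integrable (MollComm.rk ρ κ) :=
    hrk_cont.integrable_of_hasCompactSupport hrkc
  -- integrability of the commutator integrands
  have hIa : ∀ x : MollComm.V, Integrable (fun y => f1 y * D (x - y)) :=
    fun x => (hf1_cont.mul (hD_cont.comp (continuous_const.sub continuous_id))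
      ).integrable_of_hasCompactSupport hf1_supp.mul_right
  have hIb : ∀ x : MollComm.V, Integrable (fun y => u y * D (x - y)) :=
    fun x => (hu_cont.mul (hD_cont.comp (continuous_const.sub continuous_id))
      ).integrable_of_hasCompactSupport hu_supp.mul_right
  -- the derivative identity
  have hVx : ∀ x : MollComm.V,
      pd2 β (fun x => mollify ρ κ f1 x - h x * mollify ρ κ u x) x
        = (∫ y, (h y - h x) * u y * D (x - y))
          - fderiv ℝ h x (Pi.single β 1) * mollify ρ κ u x := by
    intro x
    obtain ⟨hd1, he1⟩ := MollComm.mollify_pd2 hρ hrkc hf1_cont x β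
    obtain ⟨hd2, he2⟩ := MollComm.mollify_pd2 hρ hrkc hu_cont x β
    have hdh : HasFDerivAt h (fderiv ℝ h x) x := (hh.differentiable one_ne_zero x).hasFDerivAt
    have hprod : HasFDerivAt (fun x => h x * mollify ρ κ u x)
        (h x • ((u ⋆[(ContinuousLinearMap.mul ℝ ℝ).precompR MollComm.V, volume]
            fderiv ℝ (MollComm.rk ρ κ)) x)
          + mollify ρ κ u x • fderiv ℝ h x) x := hdh.mul hd2
    have hsub := hd1.sub hprod
    have hfd := hsub.fderiv
    show fderiv ℝ (fun x => mollify ρ κ f1 x - h x * mollify ρ κ u x) x (Pi.single β 1) = _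
    rw [show (fun x => mollify ρ κ f1 x - h x * mollify ρ κ u x) = (mollify ρ κ f1 - fun x => h x * mollify ρ κ u x) from rfl, hfd]
    simp only [ContinuousLinearMap.sub_apply, ContinuousLinearMap.add_apply,
      ContinuousLinearMap.smul_apply, smul_eq_mul, he1, he2]
    have hsplit : ∫ y, (h y - h x) * u y * D (x - y)
        = (∫ y, f1 y * D (x - y)) - h x * ∫ y, u y * D (x - y) := by
      rw [← integral_const_mul, ← integral_sub (hIa x) ((hIb x).const_mul (h x))]
      refine integral_congr_ae (Filter.Eventually.of_forall fun y => ?_)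
      simp only [hf1def]
      ring
    rw [hsplit]
    ring
  -- estimation
  set fu : MollComm.V → ℝ≥0∞ := fun y => (‖u y‖₊ : ℝ≥0∞) with hfudef
  set φ1 : MollComm.V → ℝ≥0∞ := fun z => ENNReal.ofReal (M * κ) * (‖D z‖₊ : ℝ≥0∞) with hφ1def
  set φ2 : MollComm.V → ℝ≥0∞ :=
    fun z => ENNReal.ofReal M * (‖MollComm.rk ρ κ z‖₊ : ℝ≥0∞) with hφ2def
  have hfu_m : Measurable fu := hu_cont.measurable.nnnorm.coe_nnreal_ennreal
  have hφ1_m : Measurable φ1 := measurable_const.mul hD_cont.measurable.nnnorm.coe_nnreal_ennreal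
  have hφ2_m : Measurable φ2 :=
    measurable_const.mul hrk_cont.measurable.nnnorm.coe_nnreal_ennreal
  set F1 : MollComm.V → ℝ≥0∞ := fun x => ∫⁻ y, φ1 (x - y) * fu y with hF1def
  set F2 : MollComm.V → ℝ≥0∞ := fun x => ∫⁻ y, φ2 (x - y) * fu y with hF2def
  have hF1m : Measurable F1 := Measurable.lintegral_prod_right
    ((hφ1_m.comp (measurable_fst.sub measurable_snd)).mul (hfu_m.comp measurable_snd))
  have hF2m : Measurable F2 := Measurable.lintegral_prod_right
    ((hφ2_m.comp (measurable_fst.sub measurable_snd)).mul (hfu_m.comp measurable_snd))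
  -- pointwise bound for the first term
  have hterm1 : ∀ x : MollComm.V,
      (‖∫ y, (h y - h x) * u y * D (x - y)‖₊ : ℝ≥0∞) ≤ F1 x := by
    intro x
    refine le_trans (enorm_integral_le_lintegral_enorm _) (lintegral_mono fun y => ?_)
    by_cases hxy : ‖x - y‖ ≤ κ
    · have hb : |h y - h x| ≤ M * κ := by
        refine le_trans (hLip x y) ?_
        have : ‖y - x‖ ≤ κ := by rwa [norm_sub_rev]
        exact mul_le_mul_of_nonneg_left this hM0
      have hb' : (‖h y - h x‖₊ : ℝ≥0∞) ≤ ENNReal.ofReal (M * κ) := by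
        rw [← enorm_eq_nnnorm, ← ofReal_norm]
        exact ENNReal.ofReal_le_ofReal (by rwa [Real.norm_eq_abs])
      calc (‖(h y - h x) * u y * D (x - y)‖₊ : ℝ≥0∞)
          = (‖h y - h x‖₊ : ℝ≥0∞) * (‖u y‖₊ : ℝ≥0∞) * (‖D (x - y)‖₊ : ℝ≥0∞) := by
            rw [nnnorm_mul, nnnorm_mul]; push_cast; ring
        _ ≤ ENNReal.ofReal (M * κ) * (‖u y‖₊ : ℝ≥0∞) * (‖D (x - y)‖₊ : ℝ≥0∞) :=
            mul_le_mul_left (mul_le_mul_left hb' _) _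
        _ = φ1 (x - y) * fu y := by rw [hφ1def, hfudef]; ring
    · have hz : D (x - y) = 0 := by
        show (fderiv ℝ (MollComm.rk ρ κ) (x - y)) (Pi.single β 1) = 0
        rw [MollComm.rk_fderiv_eq_zero hρsupp hκ (not_le.1 hxy)]
        rfl
      simp [hz]
  -- pointwise bound for the second term
  have hterm2 : ∀ x : MollComm.V,
      (‖fderiv ℝ h x (Pi.single β 1) * mollify ρ κ u x‖₊ : ℝ≥0∞) ≤ F2 x := by
    intro x
    have hc : (‖fderiv ℝ h x (Pi.single β 1)‖₊ : ℝ≥0∞) ≤ ENNReal.ofReal M := by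
      rw [← enorm_eq_nnnorm, ← ofReal_norm]
      refine ENNReal.ofReal_le_ofReal ?_
      calc ‖fderiv ℝ h x (Pi.single β 1)‖
          ≤ ‖fderiv ℝ h x‖ * ‖(Pi.single β 1 : MollComm.V)‖ :=
            (fderiv ℝ h x).le_opNorm _
        _ = ‖fderiv ℝ h x‖ := by rw [Pi.norm_single]; simp
        _ ≤ M := hfd_le x
    have hmv : (‖mollify ρ κ u x‖₊ : ℝ≥0∞)
        ≤ ∫⁻ y, (‖MollComm.rk ρ κ (x - y)‖₊ : ℝ≥0∞) * fu y := by
      have hrepr : mollify ρ κ u x = ∫ y, MollComm.rk ρ κ (x - y) * u y := rfl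
      rw [hrepr]
      refine le_trans (enorm_integral_le_lintegral_enorm _) (lintegral_mono fun y => ?_)
      rw [enorm_mul]
      push_cast
      exact le_rfl
    calc (‖fderiv ℝ h x (Pi.single β 1) * mollify ρ κ u x‖₊ : ℝ≥0∞)
        = (‖fderiv ℝ h x (Pi.single β 1)‖₊ : ℝ≥0∞) * (‖mollify ρ κ u x‖₊ : ℝ≥0∞) := by
          rw [nnnorm_mul]; push_cast; ring
      _ ≤ ENNReal.ofReal M * ∫⁻ y, (‖MollComm.rk ρ κ (x - y)‖₊ : ℝ≥0∞) * fu y :=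
          mul_le_mul' hc hmv
      _ = F2 x := by
          rw [hF2def]
          rw [← lintegral_const_mul (ENNReal.ofReal M)
            (show Measurable fun y => (‖MollComm.rk ρ κ (x - y)‖₊ : ℝ≥0∞) * fu y from (show Measurable fun y : MollComm.V => (‖MollComm.rk ρ κ (x - y)‖₊ : ℝ≥0∞) from
              (hrk_cont.comp (continuous_const.sub continuous_id)
                ).measurable.nnnorm.coe_nnreal_ennreal).mul hfu_m)]
          exact lintegral_congr fun y => by rw [hφ2def]; ring
  have hκ0 : κ ≠ 0 := ne_of_gt hκ
  -- L¹ norm of D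
  have hDl1 : ∫ z, |D z| = κ⁻¹ * K β := by
    have he : ∀ z : MollComm.V,
        |D z| = ((κ ^ 2)⁻¹ * κ⁻¹) * |fderiv ℝ ρ (κ⁻¹ • z) (Pi.single β 1)| := by
      intro z
      show |(fderiv ℝ (MollComm.rk ρ κ) z) (Pi.single β 1)| = _
      rw [MollComm.rk_fderiv_apply hρ κ z, abs_mul, abs_mul,
        abs_of_nonneg (by positivity : (0:ℝ) ≤ (κ ^ 2)⁻¹),
        abs_of_nonneg (by positivity : (0:ℝ) ≤ κ⁻¹)]
      ring
    calc ∫ z, |D z|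
        = ∫ z, ((κ ^ 2)⁻¹ * κ⁻¹) * |fderiv ℝ ρ (κ⁻¹ • z) (Pi.single β 1)| :=
          integral_congr_ae (Filter.Eventually.of_forall he)
      _ = ((κ ^ 2)⁻¹ * κ⁻¹) * ∫ z, |fderiv ℝ ρ (κ⁻¹ • z) (Pi.single β 1)| :=
          integral_const_mul _ _
      _ = ((κ ^ 2)⁻¹ * κ⁻¹) * (κ ^ 2 * K β) := by
          congr 1
          simpa using MollComm.int_comp_inv_smul
            (fun w => |fderiv ℝ ρ w (Pi.single β 1)|) hκ
      _ = κ⁻¹ * K β := by field_simp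
  have hφ1_int : ∫⁻ z, φ1 z = ENNReal.ofReal (M * K β) := by
    calc ∫⁻ z, φ1 z
        = ENNReal.ofReal (M * κ) * ∫⁻ z, (‖D z‖₊ : ℝ≥0∞) :=
          lintegral_const_mul _ hD_cont.measurable.nnnorm.coe_nnreal_ennreal
      _ = ENNReal.ofReal (M * κ) * ENNReal.ofReal (∫ z, ‖D z‖) := by
          exact congrArg _ (ofReal_integral_norm_eq_lintegral_enorm hD_int).symm
      _ = ENNReal.ofReal (M * K β) := by
          rw [show (∫ z, ‖D z‖) = κ⁻¹ * K β by simpa [Real.norm_eq_abs] using hDl1,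
            ← ENNReal.ofReal_mul (by positivity)]
          congr 1
          field_simp
  have hrk_int1 : ∫ z, MollComm.rk ρ κ z = 1 := by
    calc ∫ z, MollComm.rk ρ κ z
        = (κ ^ 2)⁻¹ * ∫ z, ρ (κ⁻¹ • z) := integral_const_mul _ _
      _ = (κ ^ 2)⁻¹ * (κ ^ 2 * ∫ z, ρ z) := by rw [MollComm.int_comp_inv_smul ρ hκ]
      _ = 1 := by rw [hρint]; field_simp
  have hφ2_int : ∫⁻ z, φ2 z = ENNReal.ofReal M := by
    calc ∫⁻ z, φ2 z
        = ENNReal.ofReal M * ∫⁻ z, (‖MollComm.rk ρ κ z‖₊ : ℝ≥0∞) :=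
          lintegral_const_mul _ hrk_cont.measurable.nnnorm.coe_nnreal_ennreal
      _ = ENNReal.ofReal M * ENNReal.ofReal (∫ z, ‖MollComm.rk ρ κ z‖) := by
          exact congrArg _ (ofReal_integral_norm_eq_lintegral_enorm hrk_int).symm
      _ = ENNReal.ofReal M := by
          rw [show (∫ z, ‖MollComm.rk ρ κ z‖) = 1 from ?_]
          · simp
          · rw [← hrk_int1]
            refine integral_congr_ae (Filter.Eventually.of_forall fun z => ?_)
            show ‖MollComm.rk ρ κ z‖ = MollComm.rk ρ κ z
            rw [Real.norm_eq_abs, abs_of_nonneg]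
            exact mul_nonneg (by positivity) (hρnn _)
  have hsn : ∀ v : MollComm.V → ℝ, eLpNorm v 2 volume
      = (∫⁻ x, ((‖v x‖₊ : ℝ≥0∞)) ^ (2:ℝ)) ^ (1/(2:ℝ)) := by
    intro v
    rw [eLpNorm_eq_lintegral_rpow_enorm_toReal (by norm_num) (by norm_num)]
    norm_num
    rfl
  have hyoung : ∀ (φ : MollComm.V → ℝ≥0∞), Measurable φ →
      (∫⁻ x, (∫⁻ y, φ (x - y) * fu y) ^ (2:ℝ)) ^ (1/(2:ℝ))
        ≤ (∫⁻ z, φ z) * eLpNorm u 2 volume := by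
    intro φ hφ
    calc (∫⁻ x, (∫⁻ y, φ (x - y) * fu y) ^ (2:ℝ)) ^ (1/(2:ℝ))
        ≤ ((∫⁻ z, φ z) ^ (2:ℝ) * ∫⁻ y, (fu y) ^ (2:ℝ)) ^ (1/(2:ℝ)) :=
          ENNReal.rpow_le_rpow (MollComm.young φ fu hφ hfu_m) (by norm_num)
      _ = (∫⁻ z, φ z) * (∫⁻ y, (fu y) ^ (2:ℝ)) ^ (1/(2:ℝ)) := by
          rw [ENNReal.mul_rpow_of_nonneg _ _ (by norm_num), ← ENNReal.rpow_mul]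
          norm_num
      _ = (∫⁻ z, φ z) * eLpNorm u 2 volume := by rw [hsn u]
  have hXbound : ∀ x,
      (‖pd2 β (fun x => mollify ρ κ f1 x - h x * mollify ρ κ u x) x‖₊ : ℝ≥0∞)
        ≤ F1 x + F2 x := by
    intro x
    rw [hVx x]
    refine le_trans ?_ (add_le_add (hterm1 x) (hterm2 x))
    exact_mod_cast nnnorm_sub_le _ _
  calc eLpNorm (pd2 β (fun x => mollify ρ κ f1 x - h x * mollify ρ κ u x)) 2 volume
      = (∫⁻ x, ((‖pd2 β (fun x => mollify ρ κ f1 x - h x * mollify ρ κ u x) x‖₊ : ℝ≥0∞))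
          ^ (2:ℝ)) ^ (1/(2:ℝ)) := hsn _
    _ ≤ (∫⁻ x, (F1 x + F2 x) ^ (2:ℝ)) ^ (1/(2:ℝ)) :=
        ENNReal.rpow_le_rpow (lintegral_mono fun x =>
          ENNReal.rpow_le_rpow (hXbound x) (by norm_num)) (by norm_num)
    _ ≤ (∫⁻ x, (F1 x) ^ (2:ℝ)) ^ (1/(2:ℝ)) + (∫⁻ x, (F2 x) ^ (2:ℝ)) ^ (1/(2:ℝ)) :=
        ENNReal.lintegral_Lp_add_le hF1m.aemeasurable hF2m.aemeasurable one_le_two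
    _ ≤ (∫⁻ z, φ1 z) * eLpNorm u 2 volume + (∫⁻ z, φ2 z) * eLpNorm u 2 volume :=
        add_le_add (hyoung φ1 hφ1_m) (hyoung φ2 hφ2_m)
    _ = ENNReal.ofReal (M * K β + M) * eLpNorm u 2 volume := by
        rw [hφ1_int, hφ2_int, ← add_mul, ← ENNReal.ofReal_add (by positivity) hM0]
    _ ≤ ENNReal.ofReal (C * M) *
          (eLpNorm g 2 volume + ∑ γ : Fin 2, eLpNorm (pd2 γ g) 2 volume) := by
        refine mul_le_mul' (ENNReal.ofReal_le_ofReal ?_) ?_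
        · have hKβ : K β ≤ K 0 + K 1 := by
            have hβ : β = 0 ∨ β = 1 := by fin_cases β <;> [left; right] <;> rfl
            rcases hβ with hβ | hβ <;> subst hβ
            · have := hK0 1; linarith
            · have := hK0 0; linarith
          calc M * K β + M = M * (K β + 1) := by ring
            _ ≤ M * (1 + (K 0 + K 1)) := mul_le_mul_of_nonneg_left (by linarith) hM0
            _ = C * M := by rw [hCdef]; ring
        · rw [hudef]
          refine le_add_left ?_
          exact Finset.single_le_sum (f := fun γ => eLpNorm (pd2 γ g) 2 volume)
            (fun γ _ => zero_le) (Finset.mem_univ α)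
end
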